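/- Let B ∈ B(H₃,H₄) and C ∈ B(H₁,H₂) be bounded operators between separable Hilbert spaces, and let Y be a bounded finite-rank operator H₁ → H₄ with ran(Y) ⊆ ran(B) and ker(Y) ⊇ ker(C). Then B(B†YC†)C = Y on H₁, where B† and C† are the Moore–Penrose inverses. -/

import Mathlib

open scoped InnerProductSpace
open ContinuousLinearMap
noncomputable section

/-- Orthogonal projection onto the closure of the range of a bounded operator. -/
noncomputable def projClosureRan {E F : Type*}
    [NormedAddCommGroup E] [InnerProductSpace ℝ E] [CompleteSpace E]
    [NormedAddCommGroup F] [InnerProductSpace ℝ F] [CompleteSpace F]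
    (C : E →L[ℝ] F) : F →L[ℝ] F :=
  letI : CompleteSpace ((LinearMap.range (C : E →ₗ[ℝ] F)).topologicalClosure) :=
    (Submodule.isClosed_topologicalClosure _).completeSpace_coe
  ((LinearMap.range (C : E →ₗ[ℝ] F)).topologicalClosure).subtypeL ∘L
    Submodule.orthogonalProjectionOnto ((LinearMap.range (C : E →ₗ[ℝ] F)).topologicalClosure)

/-- `Cd` is the Moore–Penrose inverse of the bounded operator `C`, as a partially defined
linear operator: its domain is ran C ⊕ (ran C)ᗮ, its values lie in (ker C)ᗮ, and
C (C† k) = P_{cl ran C} k for k in the domain.  These properties determine `C†` uniquely. -/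
structure IsMPInv {E F : Type*}
    [NormedAddCommGroup E] [InnerProductSpace ℝ E] [CompleteSpace E]
    [NormedAddCommGroup F] [InnerProductSpace ℝ F] [CompleteSpace F]
    (C : E →L[ℝ] F) (Cd : F →ₗ.[ℝ] E) : Prop where
  dom_eq : Cd.domain = LinearMap.range (C : E →ₗ[ℝ] F) ⊔ (LinearMap.range (C : E →ₗ[ℝ] F))ᗮ
  mem_ran : ∀ x : E, C x ∈ Cd.domain
  val_mem : ∀ k (hk : k ∈ Cd.domain), Cd ⟨k, hk⟩ ∈ (LinearMap.ker (C : E →ₗ[ℝ] F))ᗮ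
  map_val : ∀ k (hk : k ∈ Cd.domain), C (Cd ⟨k, hk⟩) = projClosureRan C k


lemma projClosureRan_eq_self {E F : Type*}
    [NormedAddCommGroup E] [InnerProductSpace ℝ E] [CompleteSpace E]
    [NormedAddCommGroup F] [InnerProductSpace ℝ F] [CompleteSpace F]
    (C : E →L[ℝ] F) (y : F) (hy : y ∈ LinearMap.range (C : E →ₗ[ℝ] F)) :
    projClosureRan C y = y := by
  letI : CompleteSpace ((LinearMap.range (C : E →ₗ[ℝ] F)).topologicalClosure) :=
    (Submodule.isClosed_topologicalClosure _).completeSpace_coe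
  have hy' : y ∈ (LinearMap.range (C : E →ₗ[ℝ] F)).topologicalClosure :=
    Submodule.le_topologicalClosure _ hy
  exact (Submodule.starProjection_eq_self_iff).mpr hy'

/-- Let B ∈ B(H₃,H₄) and C ∈ B(H₁,H₂) be bounded operators between separable
Hilbert spaces, and let Y be a bounded finite-rank operator H₁ → H₄ with ran(Y) ⊆ ran(B) and
ker(Y) ⊇ ker(C).  Then B(B†YC†)C = Y on H₁, where B† and C† are the Moore–Penrose inverses. -/
theorem stmt6 {H₁ H₂ H₃ H₄ : Type*}
    [NormedAddCommGroup H₁] [InnerProductSpace ℝ H₁] [CompleteSpace H₁]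
    [NormedAddCommGroup H₂] [InnerProductSpace ℝ H₂] [CompleteSpace H₂]
    [NormedAddCommGroup H₃] [InnerProductSpace ℝ H₃] [CompleteSpace H₃]
    [NormedAddCommGroup H₄] [InnerProductSpace ℝ H₄] [CompleteSpace H₄]
    (B : H₃ →L[ℝ] H₄) (C : H₁ →L[ℝ] H₂) (Y : H₁ →L[ℝ] H₄)
    (hYfin : FiniteDimensional ℝ ↥(LinearMap.range (Y : H₁ →ₗ[ℝ] H₄)))
    (hYB : LinearMap.range (Y : H₁ →ₗ[ℝ] H₄) ≤ LinearMap.range (B : H₃ →ₗ[ℝ] H₄))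
    (hCY : LinearMap.ker (C : H₁ →ₗ[ℝ] H₂) ≤ LinearMap.ker (Y : H₁ →ₗ[ℝ] H₄))
    (Bd : H₄ →ₗ.[ℝ] H₃) (Cd : H₂ →ₗ.[ℝ] H₁)
    (hB : IsMPInv B Bd) (hC : IsMPInv C Cd) :
    ∀ h₁ : H₁,
      B (Bd ⟨Y (Cd ⟨C h₁, hC.mem_ran h₁⟩),
        hB.dom_eq.ge (Submodule.mem_sup_left (hYB (LinearMap.mem_range_self (Y : H₁ →ₗ[ℝ] H₄) _)))⟩) = Y h₁ := by
  intro h₁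
  have hCk : C (Cd ⟨C h₁, hC.mem_ran h₁⟩) = C h₁ := by
    rw [hC.map_val, projClosureRan_eq_self C (C h₁) ⟨h₁, rfl⟩]
  have hYk : Y (Cd ⟨C h₁, hC.mem_ran h₁⟩) = Y h₁ := by
    have hker : Cd ⟨C h₁, hC.mem_ran h₁⟩ - h₁ ∈ LinearMap.ker (C : H₁ →ₗ[ℝ] H₂) := by
      simp [LinearMap.mem_ker, map_sub, hCk]
    have := hCY hker
    rw [LinearMap.mem_ker, map_sub, sub_eq_zero] at this
    exact this
  rw [hB.map_val, projClosureRan_eq_self B (Y (Cd ⟨C h₁, hC.mem_ran h₁⟩)) (hYB (LinearMap.mem_range_self (Y : H₁ →ₗ[ℝ] H₄) _)), hYk]
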